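/- Let X ∪ {t} be a finite normalized set of terms, let st := st(X ∪ {t}) and N := |st|. For Y ⊆ st define one-step(Y) := Y ∪ {u ∈ st : u is the conclusion of a rule instance all of whose premises lie in Y}, and set Y_0 := X and Y_{i+1} := one-step(Y_i) for i ≥ 0. Then Y_i = Y_N for all i ≥ N, and X ⊢_dy t if and only if t ∈ Y_N. -/

import Mathlib

/- A formalization of the Dolev-Yao intruder model with XOR, following
"Protocol insecurity with finitely many sessions and XOR".
Multisets of terms (for the XOR operator) are represented by lists;
the normal form of an XOR term is represented canonically by sorting the
(normalized) factors in a fixed linear order (via an injective encoding of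
terms into ℕ) and cancelling pairs of equal factors (nilpotence). -/

namespace DYXor

/-- Terms: variables, names (with the distinguished names `0` and `secret`,
and keys among the names), public keys, pairs, symmetric and asymmetric
encryptions, and XORs of (multi)sets of terms. -/
inductive Term : Type where
  | var : ℕ → Term
  | name : ℕ → Term
  | pk : Term → Term
  | pair : Term → Term → Term
  | senc : Term → Term → Term
  | aenc : Term → Term → Term
  | xor : List Term → Term

/-- The distinguished name `0`, the unit of XOR. -/
def Term.zero : Term := .name 0

/-- The distinguished name `secret`. -/
def Term.secret : Term := .name 1

/-- A term is standard if it is not an XOR term. -/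
def Term.IsStandard : Term → Prop
  | .xor _ => False
  | _ => True

/-- The factors of a term, as a list (representing a multiset):
`fac(t) = {t}` for standard `t`, and the multiset union of the factors of the
members for an XOR term. -/
def facL : Term → List Term
  | .var x => [.var x]
  | .name a => [.name a]
  | .pk u => [.pk u]
  | .pair u v => [.pair u v]
  | .senc u v => [.senc u v]
  | .aenc u v => [.aenc u v]
  | .xor M => M.attach.flatMap fun u => facL u.1
decreasing_by
  have := List.sizeOf_lt_of_mem u.2
  simp only [Term.xor.sizeOf_spec]
  omega

/-- An injective encoding of terms into ℕ, fixing a canonical linear order on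
terms. -/
def encode : Term → ℕ
  | .var x => Nat.pair 0 x + 1
  | .name a => Nat.pair 1 a + 1
  | .pk u => Nat.pair 2 (encode u) + 1
  | .pair u v => Nat.pair 3 (Nat.pair (encode u) (encode v)) + 1
  | .senc u v => Nat.pair 4 (Nat.pair (encode u) (encode v)) + 1
  | .aenc u v => Nat.pair 5 (Nat.pair (encode u) (encode v)) + 1
  | .xor M => Nat.pair 6 ((M.attach.map fun u => encode u.1).foldr (fun a b => Nat.pair a b + 1) 0) + 1
decreasing_by
  all_goals first
  | (have := List.sizeOf_lt_of_mem u.2; simp only [Term.xor.sizeOf_spec]; omega)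
  | (simp only [Term.pk.sizeOf_spec, Term.pair.sizeOf_spec, Term.senc.sizeOf_spec,
      Term.aenc.sizeOf_spec]; omega)

/-- Sort a list of terms in the canonical order. -/
def sortT (l : List Term) : List Term :=
  l.mergeSort fun a b => Nat.ble (encode a) (encode b)

/-- On a (sorted) list, remove pairs of equal adjacent elements, keeping
exactly the elements that occur an odd number of times (nilpotence of ⊕). -/
def cancel : List Term → List Term
  | [] => []
  | [a] => [a]
  | a :: b :: rest =>
      if encode a = encode b then cancel rest else a :: cancel (b :: rest)

/-- `xorOf B` is the term `⊕B`, with the conventions `⊕∅ := 0` and `⊕{t} := t`. -/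
def xorOf : List Term → Term
  | [] => Term.zero
  | [t] => t
  | l => .xor l

theorem sizeOf_le_of_mem_facL : ∀ (t : Term), ∀ u ∈ facL t, sizeOf u ≤ sizeOf t
  | .xor M => by
    intro u hu
    rw [facL] at hu
    simp only [List.mem_flatMap, List.mem_attach, true_and] at hu
    obtain ⟨⟨m, hm⟩, hu⟩ := hu
    have h1 : sizeOf u ≤ sizeOf m := sizeOf_le_of_mem_facL m u hu
    have h2 := List.sizeOf_lt_of_mem hm
    simp only [Term.xor.sizeOf_spec]
    omega
  | .var x => by intro u hu; rw [facL] at hu; simp at hu; simp [hu]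
  | .name a => by intro u hu; rw [facL] at hu; simp at hu; simp [hu]
  | .pk v => by intro u hu; rw [facL] at hu; simp at hu; simp [hu]
  | .pair v w => by intro u hu; rw [facL] at hu; simp at hu; simp [hu]
  | .senc v w => by intro u hu; rw [facL] at hu; simp at hu; simp [hu]
  | .aenc v w => by intro u hu; rw [facL] at hu; simp at hu; simp [hu]
decreasing_by
  all_goals (have := List.sizeOf_lt_of_mem hm; simp only [Term.xor.sizeOf_spec]; omega)

theorem sizeOf_lt_of_mem_facL_xor (M : List Term) :
    ∀ u ∈ facL (.xor M), sizeOf u < sizeOf (Term.xor M) := by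
  intro u hu
  rw [facL] at hu
  simp only [List.mem_flatMap, List.mem_attach, true_and] at hu
  obtain ⟨⟨m, hm⟩, hu⟩ := hu
  have h1 := sizeOf_le_of_mem_facL m u hu
  have h2 := List.sizeOf_lt_of_mem hm
  simp only [Term.xor.sizeOf_spec]
  omega

/-- The normal form `nf(t)` of a term, implementing associativity,
commutativity, the unit `0` and nilpotence of ⊕: the normal form of an XOR
term `r` is the XOR of the *set* of those terms `v` such that the number of
factors `u ∈ fac(r)` with `nf(u) = v` is odd (represented canonically as a
sorted list). -/
def nf : Term → Term
  | .var x => .var x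
  | .name a => .name a
  | .pk u => .pk (nf u)
  | .pair u v => .pair (nf u) (nf v)
  | .senc u v => .senc (nf u) (nf v)
  | .aenc u v => .aenc (nf u) (nf v)
  | .xor M => xorOf (cancel (sortT ((facL (.xor M)).attach.map fun u => nf u.1)))
decreasing_by
  all_goals first
  | (exact sizeOf_lt_of_mem_facL_xor M u.1 u.2)
  | (simp only [Term.pk.sizeOf_spec, Term.pair.sizeOf_spec, Term.senc.sizeOf_spec,
      Term.aenc.sizeOf_spec]; omega)

/-- A term is normalized if it equals its normal form. -/
def Term.Normalized (t : Term) : Prop := nf t = t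

/-- Application of a substitution (a map from variables to terms, the identity
outside its domain), extended homomorphically to all terms. -/
def subst (σ : ℕ → Term) : Term → Term
  | .var x => σ x
  | .name a => .name a
  | .pk u => .pk (subst σ u)
  | .pair u v => .pair (subst σ u) (subst σ v)
  | .senc u v => .senc (subst σ u) (subst σ v)
  | .aenc u v => .aenc (subst σ u) (subst σ v)
  | .xor M => .xor (M.attach.map fun u => subst σ u.1)
decreasing_by
  all_goals first
  | (have := List.sizeOf_lt_of_mem u.2; simp only [Term.xor.sizeOf_spec]; omega)
  | (simp only [Term.pk.sizeOf_spec, Term.pair.sizeOf_spec, Term.senc.sizeOf_spec,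
      Term.aenc.sizeOf_spec]; omega)

/-- `IsFactor u t`: `u` occurs in the multiset `fac(t)` of factors of `t`. -/
inductive IsFactor : Term → Term → Prop where
  | std {t : Term} : t.IsStandard → IsFactor t t
  | xor {t u : Term} {M : List Term} : u ∈ M → IsFactor t u → IsFactor t (.xor M)

/-- The subterm relation: `Subterm u t` iff `u ∈ st(t)`. -/
inductive Subterm : Term → Term → Prop where
  | refl (t : Term) : Subterm t t
  | pk {s u : Term} : Subterm s u → Subterm s (.pk u)
  | pair_l {s u v : Term} : Subterm s u → Subterm s (.pair u v)
  | pair_r {s u v : Term} : Subterm s v → Subterm s (.pair u v)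
  | senc_l {s u v : Term} : Subterm s u → Subterm s (.senc u v)
  | senc_r {s u v : Term} : Subterm s v → Subterm s (.senc u v)
  | aenc_l {s u v : Term} : Subterm s u → Subterm s (.aenc u v)
  | aenc_r {s u v : Term} : Subterm s v → Subterm s (.aenc u v)
  | xor {s u : Term} {M : List Term} :
      IsFactor u (.xor M) → Subterm s u → Subterm s (.xor M)

/-- `st(t)` as a set of terms. -/
def stT (t : Term) : Set Term := {u | Subterm u t}

/-- `st(X)` for a set of terms `X`. -/
def stSet (X : Set Term) : Set Term := {u | ∃ t ∈ X, Subterm u t}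

/-- The variables occurring in a term. -/
def varsT (t : Term) : Set ℕ := {x | Subterm (.var x) t}

/-- A term is ground if no variable occurs in it. -/
def Ground (t : Term) : Prop := ∀ x : ℕ, ¬ Subterm (.var x) t

/-- The rules of the Dolev-Yao derivation system. -/
inductive Rule : Type where
  | ax | split1 | split2 | sdec | adec | pkR | pairR | sencR | aencR | xorR
  deriving DecidableEq

/-- Proof trees: each node carries a term (its conclusion) and a rule. -/
inductive PTree : Type where
  | node : Term → Rule → List PTree → PTree

/-- The conclusion of a proof: the term at its root. -/
def PTree.conc : PTree → Term
  | .node t _ _ => t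

/-- The last rule of a proof: the rule at its root. -/
def PTree.rule : PTree → Rule
  | .node _ r _ => r

/-- `IsProof X π` says that `π` is a derivation (proof) of `X ⊢ conc(π)`:
every node is labelled by a normalized term and is a correct instance of a
Dolev-Yao rule, and `ax`-leaves are labelled by terms of `X`. -/
inductive IsProof (X : Set Term) : PTree → Prop where
  | ax {t : Term} : t ∈ X → nf t = t → IsProof X (.node t .ax [])
  | split1 {t u : Term} {δ : PTree} :
      IsProof X δ → δ.conc = .pair t u → IsProof X (.node t .split1 [δ])
  | split2 {t u : Term} {δ : PTree} :
      IsProof X δ → δ.conc = .pair t u → IsProof X (.node u .split2 [δ])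
  | sdec {t v : Term} {δ₁ δ₂ : PTree} :
      IsProof X δ₁ → IsProof X δ₂ → δ₁.conc = .senc t v → δ₂.conc = v →
      IsProof X (.node t .sdec [δ₁, δ₂])
  | adec {t : Term} {k : ℕ} {δ₁ δ₂ : PTree} :
      IsProof X δ₁ → IsProof X δ₂ → δ₁.conc = .aenc t (.pk (.name k)) →
      δ₂.conc = .name k → IsProof X (.node t .adec [δ₁, δ₂])
  | pkR {k : ℕ} {δ : PTree} :
      IsProof X δ → δ.conc = .name k → IsProof X (.node (.pk (.name k)) .pkR [δ])
  | pairR {δ₁ δ₂ : PTree} :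
      IsProof X δ₁ → IsProof X δ₂ →
      IsProof X (.node (.pair δ₁.conc δ₂.conc) .pairR [δ₁, δ₂])
  | sencR {δ₁ δ₂ : PTree} :
      IsProof X δ₁ → IsProof X δ₂ →
      IsProof X (.node (.senc δ₁.conc δ₂.conc) .sencR [δ₁, δ₂])
  | aencR {k : ℕ} {δ₁ δ₂ : PTree} :
      IsProof X δ₁ → IsProof X δ₂ → δ₂.conc = .pk (.name k) →
      IsProof X (.node (.aenc δ₁.conc (.pk (.name k))) .aencR [δ₁, δ₂])
  | xorR {l : List PTree} :
      (∀ δ ∈ l, IsProof X δ) →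
      IsProof X (.node (nf (.xor (l.map PTree.conc))) .xorR l)

/-- `X ⊢_dy t`: there is a proof of `X ⊢ t`. -/
def Derives (X : Set Term) (t : Term) : Prop :=
  ∃ π : PTree, IsProof X π ∧ π.conc = t

/-- The subproof (subtree) relation on proof trees. -/
inductive Subproof : PTree → PTree → Prop where
  | refl (π : PTree) : Subproof π π
  | child {π δ : PTree} {t : Term} {r : Rule} {l : List PTree} :
      δ ∈ l → Subproof π δ → Subproof π (.node t r l)

/-- `terms(π)`: the set of terms labelling the nodes of `π`. -/
def termsOf (π : PTree) : Set Term := {u | ∃ δ : PTree, Subproof δ π ∧ δ.conc = u}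

/-- `axioms(π)`: the set of terms labelling the `ax`-leaves of `π`. -/
def axiomsOf (π : PTree) : Set Term :=
  {u | ∃ δ : PTree, Subproof δ π ∧ δ.rule = .ax ∧ δ.conc = u}

/-- The constructor rules `pk`, `pair`, `senc`, `aenc`. -/
def Rule.IsConstructor (r : Rule) : Prop :=
  r = .pkR ∨ r = .pairR ∨ r = .sencR ∨ r = .aencR

/-- The destructor rules `split`, `sdec`, `adec` (excluding `xor_d`). -/
def Rule.IsBasicDestructor (r : Rule) : Prop :=
  r = .split1 ∨ r = .split2 ∨ r = .sdec ∨ r = .adec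

/-- A proof ends in a destructor if its last rule is `split`/`sdec`/`adec`,
or is an `xor` with standard conclusion (`xor_d`). -/
def PTree.EndsInDestructor (π : PTree) : Prop :=
  π.rule.IsBasicDestructor ∨ (π.rule = .xorR ∧ π.conc.IsStandard)

/-- Normal proofs: (1) no occurrence of `split`/`sdec`/`adec` has its leftmost
(major) premise derived by a constructor rule; (2) in every occurrence of the
`xor` rule, no two premises are equal, no premise equals the conclusion, and no
premise is derived by an `xor` rule. -/
inductive Normal : PTree → Prop where
  | mk {t : Term} {r : Rule} {l : List PTree} :
      (∀ δ ∈ l, Normal δ) →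
      (r.IsBasicDestructor → ∀ δ₁ ∈ l.head?, ¬ δ₁.rule.IsConstructor) →
      (r = .xorR →
        (l.map PTree.conc).Nodup ∧ (∀ δ ∈ l, δ.conc ≠ t) ∧ (∀ δ ∈ l, δ.rule ≠ .xorR)) →
      Normal (.node t r l)

/-- `RuleStep Y u`: `u` is the conclusion of a rule instance all of whose
premises lie in `Y`. -/
inductive RuleStep (Y : Set Term) : Term → Prop where
  | split1 {t u : Term} : Term.pair t u ∈ Y → RuleStep Y t
  | split2 {t u : Term} : Term.pair t u ∈ Y → RuleStep Y u
  | sdec {t v : Term} : Term.senc t v ∈ Y → v ∈ Y → RuleStep Y t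
  | adec {t : Term} {k : ℕ} : Term.aenc t (.pk (.name k)) ∈ Y → Term.name k ∈ Y → RuleStep Y t
  | pkR {k : ℕ} : Term.name k ∈ Y → RuleStep Y (.pk (.name k))
  | pairR {u v : Term} : u ∈ Y → v ∈ Y → RuleStep Y (.pair u v)
  | sencR {u v : Term} : u ∈ Y → v ∈ Y → RuleStep Y (.senc u v)
  | aencR {u : Term} {k : ℕ} : u ∈ Y → Term.pk (.name k) ∈ Y → RuleStep Y (.aenc u (.pk (.name k)))
  | xorR {l : List Term} : (∀ s ∈ l, s ∈ Y) → RuleStep Y (nf (.xor l))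

/-- `one-step(Y)` relative to the ambient set `st`. -/
def oneStep (st : Set Term) (Y : Set Term) : Set Term :=
  Y ∪ {u ∈ st | RuleStep Y u}

/-- Relabel every node of a proof tree by applying `g` to its term. -/
def mapTree (g : Term → Term) : PTree → PTree
  | .node t r l => .node (g t) r (l.attach.map fun d => mapTree g d.1)
decreasing_by
  have := List.sizeOf_lt_of_mem d.2
  simp only [PTree.node.sizeOf_spec]
  omega

attribute [local instance] Classical.propDecidable

/-- `zap` relative to a set `T` of terms (to be instantiated with `nf(Dσ)`):
`zap(a) = a` for atomic `a`; `zap(t) = 0` for zappable `t` (a non-atomic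
standard term with `nf(t) ∉ T`); otherwise `zap` is applied to the arguments
and the result is normalized. -/
noncomputable def zap (T : Set Term) : Term → Term
  | .var x => .var x
  | .name a => .name a
  | .pk u => if nf (.pk u) ∈ T then nf (.pk (zap T u)) else Term.zero
  | .pair u v => if nf (.pair u v) ∈ T then nf (.pair (zap T u) (zap T v)) else Term.zero
  | .senc u v => if nf (.senc u v) ∈ T then nf (.senc (zap T u) (zap T v)) else Term.zero
  | .aenc u v => if nf (.aenc u v) ∈ T then nf (.aenc (zap T u) (zap T v)) else Term.zero
  | .xor M => nf (.xor (M.attach.map fun u => zap T u.1))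
decreasing_by
  all_goals first
  | (have := List.sizeOf_lt_of_mem u.2; simp only [Term.xor.sizeOf_spec]; omega)
  | (simp only [Term.pk.sizeOf_spec, Term.pair.sizeOf_spec, Term.senc.sizeOf_spec,
      Term.aenc.sizeOf_spec]; omega)

/-- A proof is typed if each of its subproofs either ends in a constructor
rule, or has a typed conclusion (a member of `T = nf(Dσ)`), or has a
non-standard conclusion. -/
def TypedProof (T : Set Term) (π : PTree) : Prop :=
  ∀ δ : PTree, Subproof δ π → δ.rule.IsConstructor ∨ δ.conc ∈ T ∨ ¬ δ.conc.IsStandard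

/-- A role: initial knowledge together with a sequence of (receive, send) pairs. -/
structure Role : Type where
  know : Set Term
  seq : List (Term × Term)

/-- The variables of a list of (receive, send) pairs. -/
def varsRS (ρ : List (Term × Term)) : Set ℕ :=
  {x | ∃ p ∈ ρ, Subterm (.var x) p.1 ∨ Subterm (.var x) p.2}

/-- The agent variables of a role sequence: the variables that first occur in
a send, i.e. `⋃_i (vars(s_i) \ vars({r_1, …, r_i}))`. -/
def varsA (ρ : List (Term × Term)) : Set ℕ :=
  {x | ∃ i : Fin ρ.length, Subterm (.var x) (ρ.get i).2 ∧
        ∀ j : Fin ρ.length, j.1 ≤ i.1 → ¬ Subterm (.var x) (ρ.get j).1}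

/-- The intruder variables of a role sequence. -/
def varsI (ρ : List (Term × Term)) : Set ℕ := varsRS ρ \ varsA ρ

/-- Well-formed roles: the initial knowledge is a finite set of standard
normalized terms whose variables are agent variables, and every send is
derivable from the initial knowledge together with the receives up to that
point. -/
def Role.WF (R : Role) : Prop :=
  R.know.Finite ∧
  (∀ t ∈ R.know, t.IsStandard ∧ nf t = t) ∧
  (∀ t ∈ R.know, ∀ x : ℕ, Subterm (.var x) t → x ∈ varsA R.seq) ∧
  ∀ i : Fin R.seq.length,
    Derives (R.know ∪ {u | ∃ j : Fin R.seq.length, j.1 ≤ i.1 ∧ u = (R.seq.get j).1})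
      (R.seq.get i).2

/-- A protocol: the intruder's initial knowledge and a finite list of roles. -/
structure Protocol : Type where
  init : Set Term
  roles : List Role

/-- Well-formed protocols: the initial knowledge is a finite set of normalized
ground terms, and all roles are well-formed. -/
def Protocol.WF (P : Protocol) : Prop :=
  P.init.Finite ∧ (∀ t ∈ P.init, nf t = t ∧ Ground t) ∧ ∀ R ∈ P.roles, R.WF

/-- The instantiation `ρτ` of a role sequence by a substitution. -/
def instSeq (R : Role) (τ : ℕ → Term) : List (Term × Term) :=
  R.seq.map fun p => (subst τ p.1, subst τ p.2)

/-- A session of a protocol: a role together with a substitution sending agent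
variables to names and intruder variables to variables, with the instantiated
sequence consisting of normalized terms. -/
def IsSession (P : Protocol) (R : Role) (τ : ℕ → Term) : Prop :=
  R ∈ P.roles ∧
  (∀ x ∈ varsA R.seq, ∃ a : ℕ, τ x = .name a) ∧
  (∀ x ∈ varsI R.seq, ∃ y : ℕ, τ x = .var y) ∧
  (∀ p ∈ instSeq R τ, nf p.1 = p.1 ∧ nf p.2 = p.2)

/-- Two sessions are coherent if their instantiated sequences share no variables. -/
def Coherent (s₁ s₂ : Role × (ℕ → Term)) : Prop :=
  ∀ x : ℕ, ¬ (x ∈ varsRS (instSeq s₁.1 s₁.2) ∧ x ∈ varsRS (instSeq s₂.1 s₂.2))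

/-- `Interleave ls l`: `l` is an interleaving of the lists in `ls`. -/
inductive Interleave {α : Type} : List (List α) → List α → Prop where
  | nil {ls : List (List α)} : (∀ l ∈ ls, l = []) → Interleave ls []
  | cons {ls : List (List α)} {i : Fin ls.length} {x : α} {xs ys : List α} :
      ls.get i = x :: xs → Interleave (ls.set i xs) ys → Interleave ls (x :: ys)

/-- The set `X_i` of a run: the initial knowledge `X₀` together with the first
`i` sent messages of `ξ`. -/
def runKnow (P : Protocol) (ξ : List (Term × Term)) (i : ℕ) : Set Term :=
  P.init ∪ {u | ∃ j : Fin ξ.length, j.1 < i ∧ u = (ξ.get j).2}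

/-- `nf(Xσ) = {nf(tσ) : t ∈ X}`. -/
def nfSubst (σ : ℕ → Term) (X : Set Term) : Set Term :=
  {u | ∃ t ∈ X, u = nf (subst σ t)}

/-- `(ξ, σ)` is a run generated by the pairwise coherent sessions `S` of `P`:
`ξ` is a prefix of an interleaving of the instantiated role sequences, `σ` is
a normalized ground substitution with domain `vars(ξ)`, and each received
message is derivable (after substitution and normalization) from the initial
knowledge together with the previously sent messages. -/
def IsRun (P : Protocol) (S : List (Role × (ℕ → Term)))
    (ξ : List (Term × Term)) (σ : ℕ → Term) : Prop :=
  (∀ s ∈ S, IsSession P s.1 s.2) ∧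
  S.Pairwise Coherent ∧
  (∃ full : List (Term × Term),
      Interleave (S.map fun s => instSeq s.1 s.2) full ∧ ξ.IsPrefix full) ∧
  (∀ x ∈ varsRS ξ, Ground (σ x) ∧ nf (σ x) = σ x) ∧
  (∀ x : ℕ, x ∉ varsRS ξ → σ x = .var x) ∧
  ∀ j : Fin ξ.length,
    Derives (nfSubst σ (runKnow P ξ j.1)) (nf (subst σ (ξ.get j).1))

/-- The set `C` associated with a run: all subterms of the initial knowledge,
the instantiated role knowledges, the messages of the run, and `secret`. -/
def Cset (P : Protocol) (S : List (Role × (ℕ → Term)))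
    (ξ : List (Term × Term)) : Set Term :=
  stSet (P.init ∪ {u | ∃ s ∈ S, ∃ t ∈ s.1.know, u = subst s.2 t} ∪
    {u | ∃ p ∈ ξ, u = p.1 ∨ u = p.2} ∪ {Term.secret})

/-- The set `D ⊆ C` of standard non-variable members of `C`. -/
def Dset (P : Protocol) (S : List (Role × (ℕ → Term)))
    (ξ : List (Term × Term)) : Set Term :=
  {t ∈ Cset P S ξ | t.IsStandard ∧ ∀ x : ℕ, t ≠ .var x}

/-- `nf(Dσ)`: a standard normalized term is *typed* iff it belongs to this set. -/
def TypedSet (P : Protocol) (S : List (Role × (ℕ → Term)))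
    (ξ : List (Term × Term)) (σ : ℕ → Term) : Set Term :=
  nfSubst σ (Dset P S ξ)

/-- `(ξ, σ)` is an attack: a run after which the intruder derives `secret`. -/
def IsAttack (P : Protocol) (S : List (Role × (ℕ → Term)))
    (ξ : List (Term × Term)) (σ : ℕ → Term) : Prop :=
  IsRun P S ξ σ ∧ Derives (nfSubst σ (runKnow P ξ ξ.length)) Term.secret

/-- `P` has a `K`-bounded attack. -/
def HasBoundedAttack (K : ℕ) (P : Protocol) : Prop :=
  ∃ (S : List (Role × (ℕ → Term))) (ξ : List (Term × Term)) (σ : ℕ → Term),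
    S.length = K ∧ IsAttack P S ξ σ

/-! Every member of `Y_i` is derivable, since it is the conclusion of a rule instance whose
premises are derivable. For the converse, `Z := Y_N` is a fixed point of one-step: the `Y_i`
increase inside `st`, which has `N` elements. So `Z` contains the conclusion of every rule
instance with premises in `Z` and conclusion in `st`. A proof of `X ⊢ t` may leave `st`, so the
induction over the proof carries a weaker invariant: every conclusion is composable from `Z`,
that is, up to xor-cancellation it is built from members of `Z` by constructors. A composable
term lying in `st` is already in `Z`: the constructed parts outside `st` cancel, and what is
left is one xor step over `Z`. A destructor applied to a composable term either fires on a
member of `Z` inside `st`, or it undoes a constructor. Since `t ∈ st`, we get `t ∈ Z`. -/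

theorem foldr_pair_succ_injective :
    Function.Injective (List.foldr (fun a b => Nat.pair a b + 1) 0) := by
  intro l l' h
  induction l generalizing l' with
  | nil => cases l' <;> simp_all
  | cons a l ih =>
    cases l' with
    | nil => simp at h
    | cons b l' =>
      simp only [List.foldr, Nat.add_right_cancel_iff, Nat.pair_eq_pair] at h
      rw [h.1, ih h.2]

theorem encode_injective : Function.Injective encode := by
  intro t
  induction t using Term.rec
    (motive_2 := fun M => ∀ M', M.map encode = M'.map encode → M = M') with
  | nil M' h => cases M' <;> simp_all
  | cons m M ihm ihM M' h =>
    cases M' with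
    | nil => simp at h
    | cons m' M' =>
      simp only [List.map_cons, List.cons.injEq] at h
      rw [ihm h.1, ihM _ h.2]
  | var x | name x =>
    intro s h
    cases s <;> simp only [encode, Nat.add_right_cancel_iff, Nat.pair_eq_pair] at h <;> grind
  | pk u ih =>
    intro s h
    cases s <;> simp only [encode, Nat.add_right_cancel_iff, Nat.pair_eq_pair] at h <;> try omega
    rw [ih h.2]
  | pair u v ihu ihv | senc u v ihu ihv | aenc u v ihu ihv =>
    intro s h
    cases s <;> simp only [encode, Nat.add_right_cancel_iff, Nat.pair_eq_pair] at h <;> try omega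
    all_goals rw [ihu h.2.1, ihv h.2.2]
  | xor M ih =>
    intro s h
    cases s <;> simp only [encode, Nat.add_right_cancel_iff, Nat.pair_eq_pair,
      List.attach_map_val] at h <;> try omega
    rw [ih _ (foldr_pair_succ_injective h.2)]

def EncodeLE (a b : Term) : Prop := encode a ≤ encode b

theorem eq_of_perm_of_pairwise_encodeLE {l l' : List Term} (hp : l.Perm l')
    (h : l.Pairwise EncodeLE) (h' : l'.Pairwise EncodeLE) : l = l' :=
  hp.eq_of_pairwise (fun _ _ _ _ hab hba => encode_injective (le_antisymm hab hba)) h h'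

theorem sortT_pairwise (l : List Term) : (sortT l).Pairwise EncodeLE := by
  refine (List.pairwise_mergeSort (fun a b c hab hbc => ?_) (fun a b => ?_) l).imp ?_
  · simp only [Nat.ble_eq] at *; omega
  · simp only [Bool.or_eq_true, Nat.ble_eq]; omega
  · intro a b h; simpa [EncodeLE, Nat.ble_eq] using h

theorem sortT_perm (l : List Term) : (sortT l).Perm l := List.mergeSort_perm l _

theorem cancel_subset (l : List Term) : cancel l ⊆ l := by
  induction l using cancel.induct with
  | case1 | case2 => simp [cancel]
  | case3 a b rest heq ih =>
    rw [cancel, if_pos heq]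
    exact fun x hx => List.mem_cons_of_mem _ (List.mem_cons_of_mem _ (ih hx))
  | case4 a b rest hne ih =>
    rw [cancel, if_neg hne]
    exact List.cons_subset_cons _ ih

theorem cancel_pairwise {l : List Term} (hs : l.Pairwise EncodeLE) :
    (cancel l).Pairwise EncodeLE := by
  induction l using cancel.induct with
  | case1 | case2 => simp [cancel]
  | case3 a b rest heq ih =>
    rw [cancel, if_pos heq]
    exact ih (List.pairwise_cons.1 (List.pairwise_cons.1 hs).2).2
  | case4 a b rest hne ih =>
    rw [cancel, if_neg hne]
    obtain ⟨hb, hs⟩ := List.pairwise_cons.1 hs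
    exact List.pairwise_cons.2 ⟨fun y hy => hb y (cancel_subset _ hy), ih hs⟩

theorem count_cancel {l : List Term} (hs : l.Pairwise EncodeLE) (a : Term) :
    (cancel l).count a = l.count a % 2 := by
  induction l using cancel.induct with
  | case1 => simp [cancel]
  | case2 b =>
    rw [cancel, List.count_singleton]
    split <;> rfl
  | case3 b c rest heq ih =>
    obtain rfl : b = c := encode_injective heq
    rw [cancel, if_pos heq, ih (List.pairwise_cons.1 (List.pairwise_cons.1 hs).2).2]
    simp only [List.count_cons]
    split <;> omega
  | case4 b c rest hne ih =>
    obtain ⟨hb, hs'⟩ := List.pairwise_cons.1 hs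
    rw [cancel, if_neg hne, List.count_cons, List.count_cons, ih hs']
    by_cases hba : b = a
    · subst hba
      -- `b` is strictly below the sorted tail, so it occurs only once
      have hnot : b ∉ c :: rest := by
        rintro (_ | ⟨_, hmem⟩)
        · exact hne rfl
        · exact hne (le_antisymm (hb c List.mem_cons_self) (List.rel_of_pairwise_cons hs' hmem))
      simp [List.count_eq_zero.2 hnot]
    · simp [hba]

def ParityEq {α : Type*} [BEq α] (m m' : List α) : Prop := ∀ a, m.count a % 2 = m'.count a % 2

namespace ParityEq

variable {α : Type*} [BEq α]

theorem trans {m m' m'' : List α} (h : ParityEq m m') (h' : ParityEq m' m'') :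
    ParityEq m m'' :=
  fun a => (h a).trans (h' a)

theorem filter [LawfulBEq α] {m m' : List α} (h : ParityEq m m') (p : α → Bool) :
    ParityEq (m.filter p) (m'.filter p) := by
  intro a
  by_cases hp : p a
  · rw [List.count_filter hp, List.count_filter hp, h a]
  · have hnot : ∀ l : List α, a ∉ l.filter p := fun l ha => hp (List.mem_filter.1 ha).2
    rw [List.count_eq_zero.2 (hnot m), List.count_eq_zero.2 (hnot m')]

end ParityEq

def oddPart (m : List Term) : List Term := cancel (sortT m)

theorem count_oddPart (m : List Term) (a : Term) : (oddPart m).count a = m.count a % 2 := by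
  rw [oddPart, count_cancel (sortT_pairwise m), (sortT_perm m).count_eq]

theorem parityEq_oddPart (m : List Term) : ParityEq (oddPart m) m := by
  intro a
  rw [count_oddPart, Nat.mod_mod]

theorem oddPart_pairwise (m : List Term) : (oddPart m).Pairwise EncodeLE :=
  cancel_pairwise (sortT_pairwise m)

theorem oddPart_nodup (m : List Term) : (oddPart m).Nodup := by
  rw [List.nodup_iff_count_le_one]
  intro a
  rw [count_oddPart]
  omega

theorem oddPart_subset (m : List Term) : oddPart m ⊆ m :=
  fun _ hx => (sortT_perm m).subset (cancel_subset _ hx)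

theorem oddPart_eq_of_parityEq {m m' : List Term} (h : ParityEq m m') : oddPart m = oddPart m' :=
  eq_of_perm_of_pairwise_encodeLE
    (List.perm_iff_count.2 fun a => by rw [count_oddPart, count_oddPart, h])
    (oddPart_pairwise m) (oddPart_pairwise m')

theorem oddPart_eq_self {l : List Term} (hs : l.Pairwise EncodeLE) (hn : l.Nodup) :
    oddPart l = l :=
  eq_of_perm_of_pairwise_encodeLE
    (List.perm_iff_count.2 fun a => by
      have := List.nodup_iff_count_le_one.1 hn a
      rw [count_oddPart]
      omega)
    (oddPart_pairwise l) hs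

theorem facL_of_isStandard {t : Term} (h : t.IsStandard) : facL t = [t] := by
  cases t
  case xor => exact h.elim
  all_goals rw [facL]

theorem facL_xor (M : List Term) : facL (.xor M) = M.flatMap facL := by
  rw [facL]
  simp

theorem isFactor_of_mem_facL {f t : Term} (h : f ∈ facL t) : IsFactor f t := by
  induction t using Term.rec
    (motive_2 := fun M => ∀ u ∈ M, ∀ f ∈ facL u, IsFactor f u) generalizing f with
  | xor M ih =>
    obtain ⟨u, hu, hf⟩ := List.mem_flatMap.1 (facL_xor M ▸ h)
    exact .xor hu (ih u hu f hf)
  | nil u hu => cases hu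
  | cons m M ihm ihM u hu f hf =>
    rcases List.mem_cons.1 hu with rfl | hu
    exacts [ihm hf, ihM u hu f hf]
  | _ =>
    rw [facL, List.mem_singleton] at h
    rw [h]
    exact .std trivial

theorem mem_facL_of_isFactor {f t : Term} (h : IsFactor f t) : f ∈ facL t := by
  induction h with
  | std hstd => rw [facL_of_isStandard hstd]; exact List.mem_singleton_self _
  | xor hu _ ih => rw [facL_xor]; exact List.mem_flatMap.2 ⟨_, hu, ih⟩

theorem IsFactor.isStandard {f t : Term} (h : IsFactor f t) : f.IsStandard := by
  induction h with
  | std hstd => exact hstd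
  | xor _ _ ih => exact ih

theorem IsFactor.subterm {f t : Term} (h : IsFactor f t) : Subterm f t := by
  cases h with
  | std => exact .refl _
  | xor hu hf => exact .xor (.xor hu hf) (.refl _)

theorem Subterm.trans {a b c : Term} (h₁ : Subterm a b) (h₂ : Subterm b c) : Subterm a c := by
  induction h₂ generalizing a with
  | refl => exact h₁
  | pk _ ih => exact .pk (ih h₁)
  | pair_l _ ih => exact .pair_l (ih h₁)
  | pair_r _ ih => exact .pair_r (ih h₁)
  | senc_l _ ih => exact .senc_l (ih h₁)
  | senc_r _ ih => exact .senc_r (ih h₁)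
  | aenc_l _ ih => exact .aenc_l (ih h₁)
  | aenc_r _ ih => exact .aenc_r (ih h₁)
  | xor hf _ ih => exact .xor hf (ih h₁)

@[simp] theorem nf_var (x : ℕ) : nf (.var x) = .var x := by rw [nf]
@[simp] theorem nf_name (a : ℕ) : nf (.name a) = .name a := by rw [nf]
@[simp] theorem nf_pk (u : Term) : nf (.pk u) = .pk (nf u) := by rw [nf]
@[simp] theorem nf_pair (u v : Term) : nf (.pair u v) = .pair (nf u) (nf v) := by rw [nf]
@[simp] theorem nf_senc (u v : Term) : nf (.senc u v) = .senc (nf u) (nf v) := by rw [nf]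
@[simp] theorem nf_aenc (u v : Term) : nf (.aenc u v) = .aenc (nf u) (nf v) := by rw [nf]

@[simp] theorem nf_zero : nf Term.zero = Term.zero := nf_name 0

theorem Term.IsStandard.nf {t : Term} (h : t.IsStandard) : (DYXor.nf t).IsStandard := by
  cases t <;> simp_all [Term.IsStandard]

def nfFactors (u : Term) : List Term := (facL u).map nf

theorem nfFactors_of_isStandard {u : Term} (h : u.IsStandard) : nfFactors u = [nf u] := by
  rw [nfFactors, facL_of_isStandard h, List.map_singleton]

theorem nfFactors_xor (M : List Term) : nfFactors (.xor M) = M.flatMap nfFactors := by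
  rw [nfFactors, facL_xor, List.map_flatMap]
  rfl

theorem nf_xor (M : List Term) : nf (.xor M) = xorOf (oddPart (nfFactors (.xor M))) := by
  rw [nf, oddPart, nfFactors, List.attach_map_val]

theorem nf_eq_xorOf_oddPart (t : Term) : nf t = xorOf (oddPart (nfFactors t)) := by
  by_cases h : t.IsStandard
  · rw [nfFactors_of_isStandard h, oddPart_eq_self (List.pairwise_singleton _ _)
      (List.nodup_singleton _), xorOf]
  · obtain ⟨M, rfl⟩ : ∃ M, t = .xor M := by cases t <;> simp_all [Term.IsStandard]
    exact nf_xor M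

def IsNormalFactor (e : Term) : Prop := e.IsStandard ∧ nf e = e

theorem flatMap_facL_of_forall {l : List Term} (h : ∀ e ∈ l, e.IsStandard) :
    l.flatMap facL = l := by
  induction l with
  | nil => rfl
  | cons e l ih =>
    obtain ⟨hstd, hl⟩ := List.forall_mem_cons.1 h
    rw [List.flatMap_cons, facL_of_isStandard hstd, ih hl, List.singleton_append]

theorem flatMap_nfFactors_of_forall {l : List Term} (h : ∀ e ∈ l, IsNormalFactor e) :
    l.flatMap nfFactors = l := by
  change l.flatMap (fun e => (facL e).map nf) = l
  rw [← List.map_flatMap, flatMap_facL_of_forall fun e he => (h e he).1,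
    List.map_congr_left fun e he => (h e he).2, List.map_id']

theorem xorOf_cons_cons (a b : Term) (l : List Term) :
    xorOf (a :: b :: l) = .xor (a :: b :: l) := rfl

theorem facL_xorOf {l : List Term} (h : ∀ e ∈ l, e.IsStandard) (hne : l ≠ []) :
    facL (xorOf l) = l := by
  match l, h, hne with
  | [e], h, _ => rw [xorOf, facL_of_isStandard (h e (List.mem_singleton_self e))]
  | e :: e' :: l, h, _ => rw [xorOf_cons_cons, facL_xor, flatMap_facL_of_forall h]
  | [], _, hne => exact (hne rfl).elim

theorem nfFactors_xorOf {l : List Term} (h : ∀ e ∈ l, IsNormalFactor e) (hne : l ≠ []) :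
    nfFactors (xorOf l) = l := by
  rw [nfFactors, facL_xorOf (fun e he => (h e he).1) hne,
    List.map_congr_left fun e he => (h e he).2, List.map_id']

theorem nf_xorOf {l : List Term} (h : ∀ e ∈ l, IsNormalFactor e) (hs : l.Pairwise EncodeLE)
    (hn : l.Nodup) : nf (xorOf l) = xorOf l := by
  rcases eq_or_ne l [] with rfl | hne
  · exact nf_zero
  · rw [nf_eq_xorOf_oddPart, nfFactors_xorOf h hne, oddPart_eq_self hs hn]

theorem nf_nf : ∀ t : Term, nf (nf t) = nf t
  | .var x => by simp
  | .name a => by simp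
  | .pk u => by simp [nf_nf u]
  | .pair u v => by simp [nf_nf u, nf_nf v]
  | .senc u v => by simp [nf_nf u, nf_nf v]
  | .aenc u v => by simp [nf_nf u, nf_nf v]
  | .xor M => by
    have h : ∀ e ∈ oddPart (nfFactors (.xor M)), IsNormalFactor e := by
      intro e he
      obtain ⟨f, hf, rfl⟩ := List.mem_map.1 (oddPart_subset _ he)
      have := sizeOf_lt_of_mem_facL_xor M f hf
      exact ⟨(isFactor_of_mem_facL hf).isStandard.nf, nf_nf f⟩
    rw [nf_xor, nf_xorOf h (oddPart_pairwise _) (oddPart_nodup _)]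
decreasing_by
  all_goals first
  | assumption
  | (simp only [Term.pk.sizeOf_spec, Term.pair.sizeOf_spec, Term.senc.sizeOf_spec,
      Term.aenc.sizeOf_spec]; omega)

theorem isNormalFactor_of_mem_nfFactors {e u : Term} (h : e ∈ nfFactors u) :
    IsNormalFactor e := by
  obtain ⟨f, hf, rfl⟩ := List.mem_map.1 h
  exact ⟨(isFactor_of_mem_facL hf).isStandard.nf, nf_nf f⟩

theorem forall_isNormalFactor_oddPart (u : Term) :
    ∀ e ∈ oddPart (nfFactors u), IsNormalFactor e :=
  fun _ he => isNormalFactor_of_mem_nfFactors (oddPart_subset _ he)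

theorem parityEq_nfFactors_nf {u : Term} (h : nf u ≠ Term.zero) :
    ParityEq (nfFactors (nf u)) (nfFactors u) := by
  have hne : oddPart (nfFactors u) ≠ [] := fun he => h (by rw [nf_eq_xorOf_oddPart, he, xorOf])
  rw [nf_eq_xorOf_oddPart u, nfFactors_xorOf (forall_isNormalFactor_oddPart u) hne]
  exact parityEq_oddPart _

theorem nfFactors_eq_facL {t : Term} (h : nf t = t) : nfFactors t = facL t := by
  rw [← h, nf_eq_xorOf_oddPart t]
  have hl := forall_isNormalFactor_oddPart t
  rcases eq_or_ne (oddPart (nfFactors t)) [] with hnil | hne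
  · rw [hnil, xorOf, nfFactors_of_isStandard (u := Term.zero) trivial, nf_zero,
      facL_of_isStandard (t := Term.zero) trivial]
  · rw [nfFactors_xorOf hl hne, facL_xorOf (fun e he => (hl e he).1) hne]

theorem IsFactor.nf_eq {f t : Term} (hf : IsFactor f t) (ht : nf t = t) : nf f = f := by
  have hf := mem_facL_of_isFactor hf
  rw [← nfFactors_eq_facL ht] at hf
  exact (isNormalFactor_of_mem_nfFactors hf).2

theorem Subterm.nf_eq {u t : Term} (h : Subterm u t) (ht : nf t = t) : nf u = u := by
  induction h with
  | refl => exact ht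
  | pk _ ih => simp_all
  | pair_l _ ih | senc_l _ ih | aenc_l _ ih => simp only [nf_pair, nf_senc, nf_aenc] at ht; grind
  | pair_r _ ih | senc_r _ ih | aenc_r _ ih => simp only [nf_pair, nf_senc, nf_aenc] at ht; grind
  | xor hf _ ih => exact ih (hf.nf_eq ht)

def subterms : Term → List Term
  | .var x => [.var x]
  | .name a => [.name a]
  | .pk u => .pk u :: subterms u
  | .pair u v => .pair u v :: (subterms u ++ subterms v)
  | .senc u v => .senc u v :: (subterms u ++ subterms v)
  | .aenc u v => .aenc u v :: (subterms u ++ subterms v)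
  | .xor M => .xor M :: (facL (.xor M)).attach.flatMap fun f => subterms f.1
decreasing_by
  all_goals first
  | (exact sizeOf_lt_of_mem_facL_xor M f.1 f.2)
  | (simp only [Term.pk.sizeOf_spec, Term.pair.sizeOf_spec, Term.senc.sizeOf_spec,
      Term.aenc.sizeOf_spec]; omega)

theorem self_mem_subterms (t : Term) : t ∈ subterms t := by
  cases t <;> (rw [subterms]; exact List.mem_cons_self)

theorem mem_subterms_of_subterm {u t : Term} (h : Subterm u t) : u ∈ subterms t := by
  induction h with
  | refl => exact self_mem_subterms _
  | pk _ ih => rw [subterms]; exact List.mem_cons_of_mem _ ih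
  | pair_l _ ih | senc_l _ ih | aenc_l _ ih =>
    rw [subterms]; exact List.mem_cons_of_mem _ (List.mem_append_left _ ih)
  | pair_r _ ih | senc_r _ ih | aenc_r _ ih =>
    rw [subterms]; exact List.mem_cons_of_mem _ (List.mem_append_right _ ih)
  | xor hf _ ih =>
    rw [subterms]
    exact List.mem_cons_of_mem _
      (List.mem_flatMap.2 ⟨⟨_, mem_facL_of_isFactor hf⟩, List.mem_attach _ _, ih⟩)

theorem stSet_finite {S : Set Term} (h : S.Finite) : (stSet S).Finite := by
  refine (h.biUnion fun t _ => (subterms t).finite_toSet).subset ?_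
  rintro u ⟨t, ht, hut⟩
  exact Set.mem_biUnion ht (mem_subterms_of_subterm hut)

theorem subset_stSet (S : Set Term) : S ⊆ stSet S := fun u hu => ⟨u, hu, .refl u⟩

theorem mem_stSet_of_subterm {S : Set Term} {u w : Term} (hu : u ∈ stSet S)
    (hw : Subterm w u) : w ∈ stSet S := by
  obtain ⟨t, ht, hut⟩ := hu
  exact ⟨t, ht, hw.trans hut⟩

section Iterate

variable {α : Type*} {f : Set α → Set α} {X : Set α}

theorem exists_le_ncard_map_iterate_eq {s : Set α} (hs : s.Finite) (hf : id ≤ f)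
    (hfX : ∀ i, f^[i] X ⊆ s) : ∃ j ≤ s.ncard, f (f^[j] X) = f^[j] X := by
  by_contra! hne
  -- each step up to `s.ncard` adds an element of `s`
  have hgrow : ∀ j ≤ s.ncard + 1, j ≤ (f^[j] X).ncard := by
    intro j hj
    induction j with
    | zero => exact Nat.zero_le _
    | succ j ih =>
      have hlt : f^[j] X ⊂ f^[j + 1] X := by
        rw [Function.iterate_succ_apply']
        exact ssubset_of_subset_of_ne (hf _) (hne j (by omega)).symm
      have := Set.ncard_lt_ncard hlt (hs.subset (hfX _))
      have := ih (by omega)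
      omega
  have := Set.ncard_le_ncard (hfX (s.ncard + 1)) hs
  have := hgrow _ le_rfl
  omega

theorem iterate_eq_iterate_ncard {s : Set α} (hs : s.Finite) (hf : id ≤ f)
    (hfX : ∀ i, f^[i] X ⊆ s) {i : ℕ} (hi : s.ncard ≤ i) : f^[i] X = f^[s.ncard] X := by
  obtain ⟨j, hj, hfix⟩ := exists_le_ncard_map_iterate_eq hs hf hfX
  have hstable : ∀ k, j ≤ k → f^[k] X = f^[j] X := fun k hk => by
    rw [← Nat.sub_add_cancel hk, Function.iterate_add_apply, Function.iterate_fixed hfix]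
  rw [hstable i (by omega), hstable _ hj]

end Iterate

theorem id_le_oneStep (st : Set Term) : id ≤ oneStep st := fun _ => Set.subset_union_left

theorem iterate_oneStep_subset {st X : Set Term} (hX : X ⊆ st) (i : ℕ) :
    (oneStep st)^[i] X ⊆ st := by
  induction i with
  | zero => exact hX
  | succ i ih =>
    rw [Function.iterate_succ_apply']
    exact Set.union_subset ih (Set.sep_subset _ _)

theorem exists_proofs_of_forall_derives {X : Set Term} {l : List Term}
    (h : ∀ s ∈ l, Derives X s) :
    ∃ ds : List PTree, (∀ d ∈ ds, IsProof X d) ∧ ds.map PTree.conc = l := by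
  induction l with
  | nil => exact ⟨[], by simp, rfl⟩
  | cons a l ih =>
    obtain ⟨⟨d, hd, rfl⟩, hl⟩ := List.forall_mem_cons.1 h
    obtain ⟨ds, hds, rfl⟩ := ih hl
    exact ⟨d :: ds, List.forall_mem_cons.2 ⟨hd, hds⟩, rfl⟩

theorem derives_of_ruleStep {X Y : Set Term} {u : Term} (hY : ∀ v ∈ Y, Derives X v)
    (h : RuleStep Y u) : Derives X u := by
  induction h with
  | @split1 t v h =>
    obtain ⟨d, hd, hc⟩ := hY _ h
    exact ⟨.node t .split1 [d], .split1 hd hc, rfl⟩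
  | @split2 t v h =>
    obtain ⟨d, hd, hc⟩ := hY _ h
    exact ⟨.node v .split2 [d], .split2 hd hc, rfl⟩
  | @sdec t v h₁ h₂ =>
    obtain ⟨d₁, hd₁, hc₁⟩ := hY _ h₁
    obtain ⟨d₂, hd₂, hc₂⟩ := hY _ h₂
    exact ⟨.node t .sdec [d₁, d₂], .sdec hd₁ hd₂ hc₁ hc₂, rfl⟩
  | @adec t k h₁ h₂ =>
    obtain ⟨d₁, hd₁, hc₁⟩ := hY _ h₁
    obtain ⟨d₂, hd₂, hc₂⟩ := hY _ h₂
    exact ⟨.node t .adec [d₁, d₂], .adec hd₁ hd₂ hc₁ hc₂, rfl⟩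
  | @pkR k h =>
    obtain ⟨d, hd, hc⟩ := hY _ h
    exact ⟨.node (.pk (.name k)) .pkR [d], .pkR hd hc, rfl⟩
  | pairR h₁ h₂ =>
    obtain ⟨d₁, hd₁, rfl⟩ := hY _ h₁
    obtain ⟨d₂, hd₂, rfl⟩ := hY _ h₂
    exact ⟨_, .pairR hd₁ hd₂, rfl⟩
  | sencR h₁ h₂ =>
    obtain ⟨d₁, hd₁, rfl⟩ := hY _ h₁
    obtain ⟨d₂, hd₂, rfl⟩ := hY _ h₂
    exact ⟨_, .sencR hd₁ hd₂, rfl⟩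
  | aencR h₁ h₂ =>
    obtain ⟨d₁, hd₁, rfl⟩ := hY _ h₁
    obtain ⟨d₂, hd₂, hc₂⟩ := hY _ h₂
    exact ⟨_, .aencR hd₁ hd₂ hc₂, rfl⟩
  | xorR h =>
    obtain ⟨ds, hds, rfl⟩ := exists_proofs_of_forall_derives fun s hs => hY s (h s hs)
    exact ⟨_, .xorR hds, rfl⟩

theorem derives_of_mem_iterate_oneStep {st X : Set Term} (hX : ∀ u ∈ X, nf u = u) (i : ℕ)
    {u : Term} (hu : u ∈ (oneStep st)^[i] X) : Derives X u := by
  induction i generalizing u with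
  | zero => exact ⟨.node u .ax [], .ax hu (hX u hu), rfl⟩
  | succ i ih =>
    rw [Function.iterate_succ_apply'] at hu
    rcases hu with hu | ⟨-, hu⟩
    · exact ih hu
    · exact derives_of_ruleStep (fun v hv => ih hv) hu

/-- `0` is included as the conclusion of the xor rule without premises. -/
inductive Constructed (P : Term → Prop) : Term → Prop where
  | zero : Constructed P Term.zero
  | pk {k : ℕ} : P (.name k) → Constructed P (.pk (.name k))
  | pair {u v : Term} : P u → P v → Constructed P (.pair (nf u) (nf v))
  | senc {u v : Term} : P u → P v → Constructed P (.senc (nf u) (nf v))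
  | aenc {u : Term} {k : ℕ} : P u → P (.pk (.name k)) →
      Constructed P (.aenc (nf u) (.pk (.name k)))

theorem Constructed.isNormalFactor {P : Term → Prop} {c : Term} (h : Constructed P c) :
    IsNormalFactor c := by
  cases h <;> exact ⟨trivial, by simp [nf_nf]⟩

/-- The invariant carried through proofs: up to xor-cancellation, `u` is built from members
of `Z` by constructor rules. -/
inductive Composable (Z : Set Term) : Term → Prop where
  | mk {u : Term} (g h : List Term) : (∀ z ∈ g, z ∈ Z) →
      (∀ c ∈ h, Constructed (Composable Z) c) →
      ParityEq (nfFactors u) (g.flatMap nfFactors ++ h) → Composable Z u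

def Decomposes (Z : Set Term) (P : Term → Prop) (m : List Term) : Prop :=
  ∃ g h : List Term, (∀ z ∈ g, z ∈ Z) ∧ (∀ c ∈ h, Constructed P c) ∧
    ParityEq m (g.flatMap nfFactors ++ h)

theorem composable_iff {Z : Set Term} {u : Term} :
    Composable Z u ↔ Decomposes Z (Composable Z) (nfFactors u) :=
  ⟨fun ⟨g, h, hg, hh, hpar⟩ => ⟨g, h, hg, hh, hpar⟩,
    fun ⟨g, h, hg, hh, hpar⟩ => ⟨g, h, hg, hh, hpar⟩⟩

namespace Decomposes

variable {Z : Set Term} {P : Term → Prop}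

theorem of_parityEq {m m' : List Term} (h : Decomposes Z P m) (hm : ParityEq m' m) :
    Decomposes Z P m' :=
  let ⟨g, h, hg, hh, hpar⟩ := h
  ⟨g, h, hg, hh, hm.trans hpar⟩

theorem append {m m' : List Term} (h : Decomposes Z P m) (h' : Decomposes Z P m') :
    Decomposes Z P (m ++ m') := by
  obtain ⟨g, h, hg, hh, hpar⟩ := h
  obtain ⟨g', h', hg', hh', hpar'⟩ := h'
  refine ⟨g ++ g', h ++ h', ?_, ?_, ?_⟩
  · simpa only [List.forall_mem_append] using ⟨hg, hg'⟩
  · simpa only [List.forall_mem_append] using ⟨hh, hh'⟩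
  · intro a
    have := hpar a
    have := hpar' a
    simp only [List.flatMap_append, List.count_append] at *
    omega

theorem flatMap {L : List Term} (h : ∀ s ∈ L, Decomposes Z P (nfFactors s)) :
    Decomposes Z P (L.flatMap nfFactors) := by
  induction L with
  | nil => exact ⟨[], [], by simp, by simp, fun _ => rfl⟩
  | cons s L ih =>
    obtain ⟨hs, hL⟩ := List.forall_mem_cons.1 h
    exact hs.append (ih hL)

end Decomposes

namespace Composable

variable {Z : Set Term}

theorem of_mem {z : Term} (hz : z ∈ Z) : Composable Z z :=
  ⟨[z], [], by simpa using hz, by simp, fun _ => by simp⟩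

theorem of_constructed {c : Term} (hc : Constructed (Composable Z) c) : Composable Z c :=
  ⟨[], [c], by simp, by simpa using hc, fun _ => by
    rw [nfFactors_of_isStandard hc.isNormalFactor.1, hc.isNormalFactor.2]; simp⟩

theorem nf {u : Term} (hu : Composable Z u) : Composable Z (nf u) := by
  by_cases hz : DYXor.nf u = Term.zero
  · rw [hz]
    exact of_constructed .zero
  · exact composable_iff.2 ((composable_iff.1 hu).of_parityEq (parityEq_nfFactors_nf hz))

theorem nf_xor {L : List Term} (h : ∀ s ∈ L, Composable Z s) :
    Composable Z (DYXor.nf (.xor L)) :=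
  nf <| composable_iff.2 <| nfFactors_xor L ▸
    Decomposes.flatMap fun s hs => composable_iff.1 (h s hs)

end Composable

theorem nf_xor_nil : nf (.xor []) = Term.zero := by
  rw [nf_xor, nfFactors_xor, List.flatMap_nil, oddPart, sortT, List.mergeSort_nil, cancel, xorOf]

theorem ruleStep_zero (Y : Set Term) : RuleStep Y Term.zero :=
  nf_xor_nil ▸ .xorR (by simp)

structure Saturated (st Z : Set Term) : Prop where
  subterm_mem : ∀ u ∈ st, ∀ w, Subterm w u → w ∈ st
  nf_eq : ∀ u ∈ st, nf u = u
  subset : Z ⊆ st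
  ruleStep_mem : ∀ u ∈ st, RuleStep Z u → u ∈ Z

namespace Saturated

variable {st Z : Set Term}

theorem mem_of_mem_nfFactors (hZ : Saturated st Z) {t e : Term} (ht : t ∈ st)
    (he : e ∈ nfFactors t) : e ∈ st := by
  rw [nfFactors_eq_facL (hZ.nf_eq t ht)] at he
  exact hZ.subterm_mem t ht e (isFactor_of_mem_facL he).subterm

theorem constructed_mem (hZ : Saturated st Z) {c : Term}
    (hc : Constructed (fun w => nf w ∈ st → nf w ∈ Z) c) (hst : c ∈ st) : c ∈ Z := by
  have hsub : ∀ w, Subterm w c → w ∈ st := hZ.subterm_mem c hst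
  refine hZ.ruleStep_mem c hst ?_
  cases hc with
  | zero => exact ruleStep_zero Z
  | pk h => exact .pkR (by simpa using h (by simpa using hsub _ (.pk (.refl _))))
  | pair h₁ h₂ =>
    exact .pairR (h₁ (hsub _ (.pair_l (.refl _)))) (h₂ (hsub _ (.pair_r (.refl _))))
  | senc h₁ h₂ =>
    exact .sencR (h₁ (hsub _ (.senc_l (.refl _)))) (h₂ (hsub _ (.senc_r (.refl _))))
  | aenc h₁ h₂ =>
    exact .aencR (h₁ (hsub _ (.aenc_l (.refl _))))
      (by simpa using h₂ (by simpa using hsub _ (.aenc_r (.refl _))))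

theorem nf_mem_of_parityEq (hZ : Saturated st Z) {u : Term} {g h : List Term}
    (hg : ∀ z ∈ g, z ∈ Z) (hh : ∀ c ∈ h, IsNormalFactor c ∧ (c ∈ st → c ∈ Z))
    (hpar : ParityEq (nfFactors u) (g.flatMap nfFactors ++ h)) (hu : nf u ∈ st) :
    nf u ∈ Z := by
  by_cases hz : nf u = Term.zero
  · rw [hz] at hu ⊢
    exact hZ.constructed_mem .zero hu
  set h' := h.filter fun c => decide (c ∈ st)
  have hh' : ∀ c ∈ h', IsNormalFactor c ∧ c ∈ Z := fun c hc => by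
    obtain ⟨hc, hcst⟩ := List.mem_filter.1 hc
    exact ⟨(hh c hc).1, (hh c hc).2 (of_decide_eq_true hcst)⟩
  have hgst : ∀ e ∈ g.flatMap nfFactors, e ∈ st := fun e he => by
    obtain ⟨z, hz, he⟩ := List.mem_flatMap.1 he
    exact hZ.mem_of_mem_nfFactors (hZ.subset (hg z hz)) he
  -- all factors of `nf u` and of the members of `Z` lie in `st`, so the constructed terms
  -- outside `st` cancel among themselves and can be dropped
  have hpar' : ParityEq (nfFactors (nf u)) ((g ++ h').flatMap nfFactors) := by
    rw [List.flatMap_append, flatMap_nfFactors_of_forall fun c hc => (hh' c hc).1]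
    have := ((parityEq_nfFactors_nf hz).trans hpar).filter fun c => decide (c ∈ st)
    rwa [List.filter_eq_self.2 (fun e he => decide_eq_true (hZ.mem_of_mem_nfFactors hu he)),
      List.filter_append, List.filter_eq_self.2 (fun e he => decide_eq_true (hgst e he))] at this
  have hxor : nf (.xor (g ++ h')) = nf u := by
    rw [nf_xor, nfFactors_xor, ← oddPart_eq_of_parityEq hpar', ← nf_eq_xorOf_oddPart, nf_nf]
  refine hxor ▸ hZ.ruleStep_mem _ (hxor ▸ hu) (.xorR fun s hs => ?_)
  rcases List.mem_append.1 hs with hs | hs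
  exacts [hg s hs, (hh' s hs).2]

theorem nf_mem_of_composable (hZ : Saturated st Z) {u : Term} (hu : Composable Z u)
    (hst : nf u ∈ st) : nf u ∈ Z := by
  induction hu using Composable.rec (motive_2 := fun c _ => c ∈ st → c ∈ Z) with
  | mk g h hg hh hpar ih =>
    exact hZ.nf_mem_of_parityEq hg (fun c hc => ⟨(hh c hc).isNormalFactor, ih c hc⟩) hpar hst
  | zero hc => exact hZ.constructed_mem .zero hc
  | pk _ ih hc => exact hZ.constructed_mem (.pk ih) hc
  | pair _ _ ih₁ ih₂ hc => exact hZ.constructed_mem (.pair ih₁ ih₂) hc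
  | senc _ _ ih₁ ih₂ hc => exact hZ.constructed_mem (.senc ih₁ ih₂) hc
  | aenc _ _ ih₁ ih₂ hc => exact hZ.constructed_mem (.aenc ih₁ ih₂) hc

theorem mem_of_composable (hZ : Saturated st Z) {u : Term} (hu : Composable Z u)
    (hst : u ∈ st) : u ∈ Z := by
  have hnf := hZ.nf_eq u hst
  have := hZ.nf_mem_of_composable hu (by rwa [hnf])
  rwa [hnf] at this

theorem mem_or_constructed_of_composable (hZ : Saturated st Z) {v : Term}
    (hv : Composable Z v) (hn : IsNormalFactor v) : v ∈ st ∨ Constructed (Composable Z) v := by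
  obtain ⟨g, h, hg, hh, hpar⟩ := hv
  have hmem : v ∈ g.flatMap nfFactors ++ h := by
    have := hpar v
    rw [nfFactors_of_isStandard hn.1, hn.2, List.count_singleton_self] at this
    rw [← List.count_pos_iff]
    omega
  rcases List.mem_append.1 hmem with hv | hv
  · obtain ⟨z, hz, hv⟩ := List.mem_flatMap.1 hv
    exact .inl (hZ.mem_of_mem_nfFactors (hZ.subset (hg z hz)) hv)
  · exact .inr (hh v hv)

theorem composable_of_destructor (hZ : Saturated st Z) {c t : Term} (hc : Composable Z c)
    (hn : IsNormalFactor c) (hsub : Subterm t c) (hrule : c ∈ Z → RuleStep Z t)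
    (hcons : Constructed (Composable Z) c → Composable Z t) : Composable Z t := by
  rcases hZ.mem_or_constructed_of_composable hc hn with hst | hcon
  · exact .of_mem (hZ.ruleStep_mem t (hZ.subterm_mem c hst t hsub)
      (hrule (hZ.mem_of_composable hc hst)))
  · exact hcons hcon

end Saturated

@[simp] theorem PTree.conc_node (t : Term) (r : Rule) (l : List PTree) :
    (PTree.node t r l).conc = t := rfl

theorem IsProof.nf_conc {X : Set Term} {π : PTree} (h : IsProof X π) : nf π.conc = π.conc := by
  induction h with
  | ax _ hnf => exact hnf
  | split1 _ hc ih | split2 _ hc ih => simp_all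
  | sdec _ _ hc _ ih => simp_all
  | adec _ _ hc _ ih => simp_all
  | pkR => simp
  | pairR _ _ ih₁ ih₂ | sencR _ _ ih₁ ih₂ => simp [ih₁, ih₂]
  | aencR _ _ _ ih => simp [ih]
  | xorR => exact nf_nf _

theorem Saturated.composable_conc {st Z X : Set Term} (hZ : Saturated st Z) (hXZ : X ⊆ Z)
    {π : PTree} (hπ : IsProof X π) : Composable Z π.conc := by
  induction hπ with
  | ax hX => exact .of_mem (hXZ hX)
  | @split1 t u _ hδ hc ih =>
    refine hZ.composable_of_destructor (c := .pair t u) (hc ▸ ih)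
      ⟨trivial, hc ▸ hδ.nf_conc⟩ (.pair_l (.refl _)) RuleStep.split1 fun hcon => ?_
    cases hcon with | pair h _ => exact h.nf
  | @split2 t u _ hδ hc ih =>
    refine hZ.composable_of_destructor (c := .pair t u) (hc ▸ ih)
      ⟨trivial, hc ▸ hδ.nf_conc⟩ (.pair_r (.refl _)) RuleStep.split2 fun hcon => ?_
    cases hcon with | pair _ h => exact h.nf
  | @sdec t v _ _ hδ₁ hδ₂ hc₁ hc₂ ih₁ ih₂ =>
    refine hZ.composable_of_destructor (c := .senc t v) (hc₁ ▸ ih₁)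
      ⟨trivial, hc₁ ▸ hδ₁.nf_conc⟩ (.senc_l (.refl _)) (fun hsenc => .sdec hsenc ?_)
      fun hcon => ?_
    · exact hZ.mem_of_composable (hc₂ ▸ ih₂)
        (hZ.subterm_mem _ (hZ.subset hsenc) _ (.senc_r (.refl _)))
    · cases hcon with | senc h _ => exact h.nf
  | @adec t k _ _ hδ₁ hδ₂ hc₁ hc₂ ih₁ ih₂ =>
    refine hZ.composable_of_destructor (c := .aenc t (.pk (.name k))) (hc₁ ▸ ih₁)
      ⟨trivial, hc₁ ▸ hδ₁.nf_conc⟩ (.aenc_l (.refl _)) (fun haenc => .adec haenc ?_)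
      fun hcon => ?_
    · exact hZ.mem_of_composable (hc₂ ▸ ih₂)
        (hZ.subterm_mem _ (hZ.subset haenc) _ (.aenc_r (.pk (.refl _))))
    · cases hcon with | aenc h _ => exact h.nf
  | pkR _ hc ih => exact .of_constructed (by simpa using Constructed.pk (hc ▸ ih))
  | pairR hδ₁ hδ₂ ih₁ ih₂ =>
    exact .of_constructed <| by
      simpa [hδ₁.nf_conc, hδ₂.nf_conc] using Constructed.pair ih₁ ih₂
  | sencR hδ₁ hδ₂ ih₁ ih₂ =>
    exact .of_constructed <| by
      simpa [hδ₁.nf_conc, hδ₂.nf_conc] using Constructed.senc ih₁ ih₂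
  | aencR hδ₁ _ hc ih₁ ih₂ =>
    exact .of_constructed (by simpa [hδ₁.nf_conc] using Constructed.aenc ih₁ (hc ▸ ih₂))
  | xorR _ ih =>
    refine .nf_xor fun s hs => ?_
    obtain ⟨δ, hδ, rfl⟩ := List.mem_map.1 hs
    exact ih δ hδ

theorem saturated_iterate_oneStep {S X : Set Term} (hS : S.Finite) (hnorm : ∀ u ∈ S, nf u = u)
    (hX : X ⊆ stSet S) : Saturated (stSet S) ((oneStep (stSet S))^[(stSet S).ncard] X) where
  subterm_mem _ hu _ hw := mem_stSet_of_subterm hu hw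
  nf_eq := fun _ ⟨s, hs, hus⟩ => hus.nf_eq (hnorm s hs)
  subset := iterate_oneStep_subset hX _
  ruleStep_mem u hu hr := by
    have hfix := iterate_eq_iterate_ncard (stSet_finite hS) (id_le_oneStep _)
      (iterate_oneStep_subset hX) (Nat.le_succ _)
    rw [Function.iterate_succ_apply'] at hfix
    exact hfix ▸ .inr ⟨hu, hr⟩

/-- Let `X ∪ {t}` be a finite normalized set of terms, let
`st := st(X ∪ {t})` and `N := |st|`. With
`one-step(Y) := Y ∪ {u ∈ st | u is the conclusion of a rule instance all of
whose premises lie in Y}`, `Y_0 := X` and `Y_{i+1} := one-step(Y_i)`, we have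
`Y_i = Y_N` for all `i ≥ N`, and `X ⊢_dy t` iff `t ∈ Y_N`. -/
theorem oneStep_fixpoint_characterization (X : Set Term) (t : Term)
    (hfin : (X ∪ {t}).Finite)
    (hnorm : ∀ u ∈ X ∪ {t}, nf u = u) :
    (∀ i : ℕ, (stSet (X ∪ {t})).ncard ≤ i →
      (oneStep (stSet (X ∪ {t})))^[i] X =
        (oneStep (stSet (X ∪ {t})))^[(stSet (X ∪ {t})).ncard] X) ∧
    (Derives X t ↔
      t ∈ (oneStep (stSet (X ∪ {t})))^[(stSet (X ∪ {t})).ncard] X) := by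
  have hXst : X ⊆ stSet (X ∪ {t}) := Set.subset_union_left.trans (subset_stSet _)
  refine ⟨fun i hi => iterate_eq_iterate_ncard (stSet_finite hfin) (id_le_oneStep _)
    (iterate_oneStep_subset hXst) hi, fun ⟨π, hπ, hconc⟩ => ?_,
    derives_of_mem_iterate_oneStep (fun u hu => hnorm u (.inl hu)) _⟩
  have hZ := saturated_iterate_oneStep hfin hnorm hXst
  have hXZ : X ⊆ (oneStep (stSet (X ∪ {t})))^[(stSet (X ∪ {t})).ncard] X :=
    Function.monotone_iterate_of_id_le (id_le_oneStep _) (Nat.zero_le _) X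
  exact hZ.mem_of_composable (hconc ▸ hZ.composable_conc hXZ hπ)
    (subset_stSet _ (Set.mem_union_right _ rfl))

end DYXor
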